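/- arXiv:2204.08388 — 4 statements merged into one kernel-verified Lean document; each statement's English description precedes it below -/
import Mathlib

section
/- Assume d : G₁ → G₂ is surjective and that there exists a group homomorphism σ₁ : G₁ → K₁ with σ₁ ∘ j₁ = id_{K₁}. Then there exists a group homomorphism σ₂ : G₂ → K₂ with σ₂ ∘ j₂ = id_{K₂}. (Abstract group-theoretic form of Theorem 3.4: transfer of a splitting of j along a surjection of commutative ladders of short exact sequences.) -/
/-- Abstract group-theoretic form of Theorem 3.4: transfer of a splitting of `j`
along a surjection of commutative ladders of short exact sequences. -/
theorem stmt_0 {K₁ G₁ K₂ G₂ C : Type*}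
    [Group K₁] [Group G₁] [Group K₂] [Group G₂] [Group C]
    (j₁ : K₁ →* G₁) (π₁ : G₁ →* C) (j₂ : K₂ →* G₂) (π₂ : G₂ →* C)
    (dId : K₁ →* K₂) (d : G₁ →* G₂)
    (hj₁ : Function.Injective j₁) (hπ₁ : Function.Surjective π₁)
    (hexact₁ : j₁.range = π₁.ker)
    (hj₂ : Function.Injective j₂) (hπ₂ : Function.Surjective π₂)
    (hexact₂ : j₂.range = π₂.ker)
    (hladder₁ : ∀ k, j₂ (dId k) = d (j₁ k))
    (hladder₂ : ∀ g, π₂ (d g) = π₁ g)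
    (hd : Function.Surjective d)
    (σ₁ : G₁ →* K₁) (hσ₁ : ∀ k, σ₁ (j₁ k) = k) :
    ∃ σ₂ : G₂ →* K₂, ∀ k, σ₂ (j₂ k) = k := by
  -- kernel condition: ker d ≤ ker (dId ∘ σ₁)
  have hker : d.ker ≤ (dId.comp σ₁).ker := by
    intro g hg
    have hg1 : d g = 1 := hg
    have hπ : π₁ g = 1 := by rw [← hladder₂, hg1, map_one]
    have : g ∈ π₁.ker := hπ
    rw [← hexact₁] at this
    obtain ⟨k, hk⟩ := this
    have hk2 : j₂ (dId k) = 1 := by rw [hladder₁, hk, hg1]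
    have : dId k = 1 := hj₂ (by rw [hk2, map_one])
    show dId (σ₁ g) = 1
    rw [← hk, hσ₁, this]
  refine ⟨d.liftOfSurjective hd ⟨dId.comp σ₁, hker⟩, fun k => ?_⟩
  -- dId is surjective
  have hdId : Function.Surjective dId := by
    intro k₂
    obtain ⟨g, hg⟩ := hd (j₂ k₂)
    have hπ : π₁ g = 1 := by
      rw [← hladder₂, hg]
      have : j₂ k₂ ∈ π₂.ker := by rw [← hexact₂]; exact ⟨k₂, rfl⟩
      exact this
    have : g ∈ π₁.ker := hπ
    rw [← hexact₁] at this
    obtain ⟨k₁, hk₁⟩ := this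
    refine ⟨k₁, hj₂ ?_⟩
    rw [hladder₁, hk₁, hg]
  obtain ⟨k₁, hk₁⟩ := hdId k
  have hj : j₂ k = d (j₁ k₁) := by rw [← hladder₁, hk₁]
  rw [hj]
  have := d.liftOfRightInverse_comp_apply (Function.surjInv hd)
    (Function.rightInverse_surjInv hd) ⟨dId.comp σ₁, hker⟩ (j₁ k₁)
  rw [MonoidHom.liftOfSurjective]
  rw [this]
  simp [hσ₁, hk₁]
end

section
/- Assume d : G₁ → G₂ is surjective and that there exists a group homomorphism σ₁ : G₁ → K₁ with σ₁ ∘ j₁ = id_{K₁}. Then there exists a group homomorphism σ₂ : G₂ → K₂ with σ₂ ∘ j₂ = id_{K₂} such that the map G₂ → K₂ × C sending g to (σ₂(g), π₂(g)) is a group isomorphism; in particular G₂ is isomorphic to the direct product K₂ × C. (This is the direct product decomposition π₀(DL_K(A)) = π₀(DL_K^{id}(A)) × Gal(K_e/K) of Theorem 3.4, stated in abstract group-theoretic form.) -/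
/-- Theorem 3.4 in abstract group-theoretic form: the surjection `d` and the
splitting `σ₁` of `j₁` yield a splitting `σ₂` of `j₂` such that
`g ↦ (σ₂ g, π₂ g)` is a group isomorphism `G₂ ≃* K₂ × C`. -/
theorem stmt_1 {K₁ G₁ K₂ G₂ C : Type*}
    [Group K₁] [Group G₁] [Group K₂] [Group G₂] [Group C]
    (j₁ : K₁ →* G₁) (π₁ : G₁ →* C) (j₂ : K₂ →* G₂) (π₂ : G₂ →* C)
    (dId : K₁ →* K₂) (d : G₁ →* G₂)
    (hj₁ : Function.Injective j₁) (hπ₁ : Function.Surjective π₁)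
    (hexact₁ : j₁.range = π₁.ker)
    (hj₂ : Function.Injective j₂) (hπ₂ : Function.Surjective π₂)
    (hexact₂ : j₂.range = π₂.ker)
    (hladder₁ : ∀ k, j₂ (dId k) = d (j₁ k))
    (hladder₂ : ∀ g, π₂ (d g) = π₁ g)
    (hd : Function.Surjective d)
    (σ₁ : G₁ →* K₁) (hσ₁ : ∀ k, σ₁ (j₁ k) = k) :
    ∃ σ₂ : G₂ →* K₂, (∀ k, σ₂ (j₂ k) = k) ∧
      ∃ e : G₂ ≃* K₂ × C, ∀ g, e g = (σ₂ g, π₂ g) := by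
  -- kernel condition: ker d ≤ ker (dId ∘ σ₁)
  have hker : ∀ x ∈ d.ker, (dId.comp σ₁) x = 1 := by
    intro x hx
    have hx1 : d x = 1 := hx
    have hπ : π₁ x = 1 := by rw [← hladder₂, hx1, map_one]
    have hxr : x ∈ j₁.range := by rw [hexact₁]; exact hπ
    obtain ⟨k, rfl⟩ := hxr
    have : j₂ (dId k) = 1 := by rw [hladder₁, hx1]
    have hk : dId k = 1 := hj₂ (by simpa using this)
    simp [MonoidHom.comp_apply, hσ₁, hk]
  set σ₂ : G₂ →* K₂ :=
    d.liftOfRightInverse (Function.surjInv hd) (Function.rightInverse_surjInv hd)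
      ⟨dId.comp σ₁, hker⟩ with hσ₂def
  have hcomm : ∀ x : G₁, σ₂ (d x) = dId (σ₁ x) := by
    intro x
    exact d.liftOfRightInverse_comp_apply _ _ ⟨dId.comp σ₁, hker⟩ x
  -- retraction property
  have hret : ∀ k : K₂, σ₂ (j₂ k) = k := by
    intro k
    have hπk : π₂ (j₂ k) = 1 := by
      have : j₂ k ∈ π₂.ker := hexact₂ ▸ ⟨k, rfl⟩
      exact this
    obtain ⟨g, hg⟩ := hd (j₂ k)
    have hπg : π₁ g = 1 := by rw [← hladder₂, hg, hπk]
    have : g ∈ j₁.range := by rw [hexact₁]; exact hπg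
    obtain ⟨k₁, rfl⟩ := this
    have hk : j₂ (dId k₁) = j₂ k := by rw [hladder₁, hg]
    have hk' : dId k₁ = k := hj₂ hk
    rw [← hg, hcomm, hσ₁, hk']
  refine ⟨σ₂, hret, ?_⟩
  -- the map g ↦ (σ₂ g, π₂ g)
  have hbij : Function.Bijective (fun g : G₂ => ((σ₂ g, π₂ g) : K₂ × C)) := by
    constructor
    · intro a b hab
      have h1 : σ₂ a = σ₂ b := congrArg Prod.fst hab
      have h2 : π₂ a = π₂ b := congrArg Prod.snd hab
      have hπ : π₂ (a * b⁻¹) = 1 := by simp [h2]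
      have : a * b⁻¹ ∈ j₂.range := by rw [hexact₂]; exact hπ
      obtain ⟨k, hk⟩ := this
      have hk1 : k = 1 := by
        have := hret k
        rw [hk] at this
        simp [h1] at this
        exact this.symm
      have : a * b⁻¹ = 1 := by rw [← hk, hk1, map_one]
      exact mul_inv_eq_one.mp this
    · rintro ⟨k, c⟩
      obtain ⟨g₁, hg₁⟩ := hπ₁ c
      refine ⟨j₂ (k * (σ₂ (d g₁))⁻¹) * d g₁, ?_⟩
      have hπj : ∀ k' : K₂, π₂ (j₂ k') = 1 := by
        intro k'
        have : j₂ k' ∈ π₂.ker := hexact₂ ▸ ⟨k', rfl⟩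
        exact this
      simp [map_mul, hret, hπj, hladder₂, hg₁]
  refine ⟨MulEquiv.ofBijective ((σ₂.prod π₂)) (by exact hbij), fun g => rfl⟩
end

section
/- Assume d : G₁ → G₂ is surjective and let σ₁ : G₁ → K₁ be a group homomorphism with σ₁ ∘ j₁ = id_{K₁}. Then there exists a unique group homomorphism σ₂ : G₂ → K₂ satisfying σ₂ ∘ d = dⁱᵈ ∘ σ₁, and this σ₂ satisfies σ₂ ∘ j₂ = id_{K₂}. (Construction of the splitting σ in the proof of Theorem 3.4, together with the compatibility σ ∘ d = dⁱᵈ ∘ σ_ℓ established there.) -/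
/-- Construction of the splitting `σ` in the proof of Theorem 3.4: there is a
unique group homomorphism `σ₂ : G₂ →* K₂` with `σ₂ ∘ d = dⁱᵈ ∘ σ₁`, and it
satisfies `σ₂ ∘ j₂ = id`. -/
theorem stmt_4 {K₁ G₁ K₂ G₂ C : Type*}
    [Group K₁] [Group G₁] [Group K₂] [Group G₂] [Group C]
    (j₁ : K₁ →* G₁) (π₁ : G₁ →* C) (j₂ : K₂ →* G₂) (π₂ : G₂ →* C)
    (dId : K₁ →* K₂) (d : G₁ →* G₂)
    (hj₁ : Function.Injective j₁) (hπ₁ : Function.Surjective π₁)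
    (hexact₁ : j₁.range = π₁.ker)
    (hj₂ : Function.Injective j₂) (hπ₂ : Function.Surjective π₂)
    (hexact₂ : j₂.range = π₂.ker)
    (hladder₁ : ∀ k, j₂ (dId k) = d (j₁ k))
    (hladder₂ : ∀ g, π₂ (d g) = π₁ g)
    (hd : Function.Surjective d)
    (σ₁ : G₁ →* K₁) (hσ₁ : ∀ k, σ₁ (j₁ k) = k) :
    (∃! σ₂ : G₂ →* K₂, ∀ g, σ₂ (d g) = dId (σ₁ g)) ∧
      (∀ σ₂ : G₂ →* K₂, (∀ g, σ₂ (d g) = dId (σ₁ g)) → ∀ k, σ₂ (j₂ k) = k) := by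
  have hker : d.ker ≤ (dId.comp σ₁).ker := by
    intro g hg
    have hg1 : d g = 1 := hg
    have hπ : π₁ g = 1 := by rw [← hladder₂, hg1, map_one]
    have : g ∈ j₁.range := by rw [hexact₁]; exact hπ
    obtain ⟨k, rfl⟩ := this
    have : j₂ (dId k) = 1 := by rw [hladder₁, hg1]
    have hk : dId k = 1 := hj₂ (by simpa using this)
    simp [MonoidHom.mem_ker, hσ₁, hk]
  let e := QuotientGroup.quotientKerEquivOfSurjective d hd
  let σ₂ : G₂ →* K₂ :=
    (QuotientGroup.lift d.ker (dId.comp σ₁) hker).comp e.symm.toMonoidHom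
  have hσ₂ : ∀ g, σ₂ (d g) = dId (σ₁ g) := by
    intro g
    have : e.symm (d g) = QuotientGroup.mk g := by
      rw [MulEquiv.symm_apply_eq]
      rfl
    simp [σ₂, this]
  have huniq : ∀ σ : G₂ →* K₂, (∀ g, σ (d g) = dId (σ₁ g)) → σ = σ₂ := by
    intro σ hσ
    ext x
    obtain ⟨g, rfl⟩ := hd x
    rw [hσ, hσ₂]
  refine ⟨⟨σ₂, hσ₂, huniq⟩, ?_⟩
  intro σ hσ k
  obtain ⟨g, hg⟩ := hd (j₂ k)
  have hπ : π₁ g = 1 := by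
    rw [← hladder₂, hg]
    have : j₂ k ∈ π₂.ker := hexact₂ ▸ ⟨k, rfl⟩
    exact this
  obtain ⟨k₁, rfl⟩ : g ∈ j₁.range := hexact₁ ▸ hπ
  have : j₂ (dId k₁) = j₂ k := by rw [hladder₁, hg]
  have hk : dId k₁ = k := hj₂ this
  rw [← hg, hσ, hσ₁, hk]
end

section
/- Let F be a field of characteristic different from 2 and let n ≥ 2 be even. Then there is no group homomorphism σ : GL_n(F) → SL_n(F) such that σ(g) = g for all g ∈ SL_n(F); that is, the inclusion SL_n(F) → GL_n(F) admits no retraction, so the short exact sequence 1 → SL_n(F) → GL_n(F) → F^× → 1 does not split as a direct product. (Corrected form of the non-splitting claim in Example 4.1.) -/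
/-!
Let `σ` be a retraction of `SL_n(F) → GL_n(F)`. For `g ∈ GL_n(F)` the element `k = g σ(g)⁻¹` lies in
`ker σ` and has `det k = det g`. For `x ∈ SL_n(F)` also `k x k⁻¹ ∈ SL_n(F)`, so
`k x k⁻¹ = σ(k x k⁻¹) = x`: `k` commutes with every transvection and is a scalar `r`. Moreover
`ker σ ∩ SL_n(F) = 1`, so `det` is injective on `ker σ`. Taking `det g = -1` gives `r ^ n = -1`
and `k² = 1`, i.e. `r² = 1`; for even `n` this forces `1 = -1`.
-/

namespace Matrix.SpecialLinearGroup

variable {ι R : Type*} [Fintype ι] [DecidableEq ι] [CommRing R]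
  {σ : GL ι R →* SpecialLinearGroup ι R}

theorem toGL_apply_retraction_of_det_eq_one (hσ : ∀ g, σ (toGL g) = g) {g : GL ι R}
    (hg : GeneralLinearGroup.det g = 1) : toGL (σ g) = g := by
  obtain ⟨x, rfl⟩ : ∃ x : SpecialLinearGroup ι R, toGL x = g :=
    ⟨⟨g, by simpa [Units.ext_iff] using hg⟩, Units.ext rfl⟩
  rw [hσ]

theorem eq_one_of_mem_ker_retraction_of_det_eq_one (hσ : ∀ g, σ (toGL g) = g) {k : GL ι R}
    (hk : σ k = 1) (hdet : GeneralLinearGroup.det k = 1) : k = 1 := by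
  rw [← toGL_apply_retraction_of_det_eq_one hσ hdet, hk, map_one]

theorem commute_toGL_of_mem_ker_retraction (hσ : ∀ g, σ (toGL g) = g) {k : GL ι R}
    (hk : σ k = 1) (x : SpecialLinearGroup ι R) : Commute k (toGL x) := by
  have hconj := toGL_apply_retraction_of_det_eq_one hσ (g := k * toGL x * k⁻¹) (by simp)
  simp only [map_mul, map_inv, hk, hσ, inv_one, one_mul, mul_one] at hconj
  exact mul_inv_eq_iff_eq_mul.mp hconj.symm

theorem val_mem_range_scalar_of_mem_ker_retraction (hσ : ∀ g, σ (toGL g) = g) {k : GL ι R}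
    (hk : σ k = 1) : (k : Matrix ι ι R) ∈ Set.range (scalar ι) :=
  mem_range_scalar_of_commute_transvectionStruct fun t =>
    (commute_toGL_of_mem_ker_retraction hσ hk ⟨t.toMatrix, by simp⟩).units_val.symm

theorem exists_pow_eq_one_and_pow_card_eq_of_retraction [Nonempty ι]
    (hσ : ∀ g, σ (toGL g) = g) {u : Rˣ} {m : ℕ} (hu : u ^ m = 1) :
    ∃ r : R, r ^ m = 1 ∧ r ^ Fintype.card ι = u := by
  obtain ⟨g, hg⟩ := GeneralLinearGroup.det_surjective (n := ι) u
  set k := g * toGL (σ g)⁻¹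
  have hk : σ k = 1 := by simp [k, hσ]
  have hdet : GeneralLinearGroup.det k = u := by simp [k, hg]
  obtain ⟨r, hr⟩ := val_mem_range_scalar_of_mem_ker_retraction hσ hk
  have hkm : k ^ m = 1 :=
    eq_one_of_mem_ker_retraction_of_det_eq_one hσ (by simp [hk]) (by simp [hdet, hu])
  obtain ⟨i⟩ := ‹Nonempty ι›
  refine ⟨r, ?_, ?_⟩
  · have hrm : scalar ι (r ^ m) = 1 := by
      rw [map_pow, hr, ← Units.val_pow_eq_pow_val, hkm, Units.val_one]
    simpa using congrFun₂ hrm i i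
  · simpa [← hr] using congrArg Units.val hdet

end Matrix.SpecialLinearGroup

open Matrix.SpecialLinearGroup in
/-- Corrected form of the non-splitting claim in Example 4.1: for `F` of
characteristic `≠ 2` and `n ≥ 2` even, the inclusion `SL_n(F) → GL_n(F)`
admits no retraction. -/
theorem stmt_12 {F : Type*} [Field F] (hchar : ringChar F ≠ 2)
    (n : ℕ) (hn : 2 ≤ n) (heven : Even n) :
    ¬ ∃ σ : GL (Fin n) F →* Matrix.SpecialLinearGroup (Fin n) F,
        ∀ g : Matrix.SpecialLinearGroup (Fin n) F,
          σ (Matrix.SpecialLinearGroup.toGL g) = g := by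
  rintro ⟨σ, hσ⟩
  have : NeZero n := ⟨by omega⟩
  obtain ⟨r, hr2, hrn⟩ :=
    exists_pow_eq_one_and_pow_card_eq_of_retraction hσ (u := -1) (m := 2) (by simp)
  obtain ⟨t, rfl⟩ := heven
  rw [Fintype.card_fin, ← two_mul, pow_mul, hr2, one_pow, Units.val_neg, Units.val_one] at hrn
  exact Ring.two_ne_zero hchar (by linear_combination hrn)
end
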